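/- arXiv:1712.00233 — 6 statements merged into one kernel-verified Lean document; each statement's English description precedes it below -/
import Mathlib

section
/- Let f : ∏_{n=1}^N Fin I_n → ℝ admit a tensor train representation with cores T^(n) : Fin I_n → Matrix (Fin R_{n-1}) (Fin R_n) ℝ (R_0 = R_N = 1), i.e. f(x) = T^(1)[x_1] · T^(2)[x_2] · ... · T^(N)[x_N] (the single entry of the resulting 1×1 matrix). For each subset α ⊆ {1,...,N}, define cores T_α^(n) by: T_α^(n)[j] := E[T^(n)] for n ∉ α, and T_α^(n)[j] := T^(n)[j] − E[T^(n)] for n ∈ α, where E[T^(n)] := Σ_{i} w_n(i)·T^(n)[i] is the average of the slices of the n-th core weighted by w_n. Then for every α and every x, the matrix product T_α^(1)[x_1] · ... · T_α^(N)[x_N] equals the ANOVA term f_α(x_α) of f with respect to the product measure w. -/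
open Finset

/-- Partial expectation `E_{-α}[f]` with respect to the product weights `w`:
sum over all points agreeing with `x` on `α`, weighted by the complement weights. -/
noncomputable def partialE {N : ℕ} {I : Fin N → ℕ} (w : ∀ n : Fin N, Fin (I n) → ℝ)
    (α : Finset (Fin N)) (f : ((n : Fin N) → Fin (I n)) → ℝ)
    (x : (n : Fin N) → Fin (I n)) : ℝ :=
  ∑ y ∈ Finset.univ.filter (fun y : (n : Fin N) → Fin (I n) => ∀ m ∈ α, y m = x m),
    (∏ m ∈ αᶜ, w m (y m)) * f y

/-- The ANOVA (Sobol) terms, defined by the recursion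
`f_α(x) = E_{-α}[f](x_α) - Σ_{β ⊊ α} f_β(x_β)` (so `f_∅ = E[f]`). -/
noncomputable def anova {N : ℕ} {I : Fin N → ℕ} (w : ∀ n : Fin N, Fin (I n) → ℝ)
    (f : ((n : Fin N) → Fin (I n)) → ℝ) (α : Finset (Fin N))
    (x : (n : Fin N) → Fin (I n)) : ℝ :=
  partialE w α f x - ∑ β ∈ (α.powerset.erase α).attach, anova w f β.1 x
termination_by α.card
decreasing_by
  have h := Finset.mem_erase.mp β.2
  exact Finset.card_lt_card (lt_of_le_of_ne (Finset.mem_powerset.mp h.2) h.1)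

/-- Ordered matrix product `A 0 * A 1 * ... * A (N-1)` of a chain of matrices with
compatible sizes `R 0 × R 1`, `R 1 × R 2`, ..., `R (N-1) × R N`. -/
def matChain {N : ℕ} (R : Fin (N+1) → ℕ)
    (A : ∀ n : Fin N, Matrix (Fin (R n.castSucc)) (Fin (R n.succ)) ℝ) :
    Matrix (Fin (R 0)) (Fin (R (Fin.last N))) ℝ :=
  Fin.induction (motive := fun i => Matrix (Fin (R 0)) (Fin (R i)) ℝ)
    1 (fun n M => M * A n) (Fin.last N)

/-- The matrix product `T^(1)[x_1] * ... * T^(N)[x_N]` of the tensor-train cores `T`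
evaluated at the multi-index `x`.  When `R 0 = R N = 1` this is a `1 × 1` matrix whose
single entry is the value of the represented tensor at `x`. -/
def ttProd {N : ℕ} {I : Fin N → ℕ} (R : Fin (N+1) → ℕ)
    (T : ∀ n : Fin N, Fin (I n) → Matrix (Fin (R n.castSucc)) (Fin (R n.succ)) ℝ)
    (x : ∀ n : Fin N, Fin (I n)) : Matrix (Fin (R 0)) (Fin (R (Fin.last N))) ℝ :=
  matChain R (fun n => T n (x n))

/-! The ANOVA terms are the unique family whose sums over subsets `γ ⊆ β` are the partial
expectations `E_{-β}[f]`. For any `f` this gives `f_α(x) = Σ_y (∏_n c_n(x_n, y_n)) f(y)` with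
`c_n = δ - w_n` for `n ∈ α` and `c_n = w_n` otherwise: summing these kernels over `γ ⊆ β`
collapses coordinatewise, since `(δ - w_n) + w_n = δ`. On the tensor-train side the core
`T_α^(n)[x_n]` is `Σ_k c_n(x_n, k) T^(n)[k]`, and the chain product is multilinear in its
factors, so it expands to the same sum. -/

theorem matChain_succ {N : ℕ} (R : Fin (N+2) → ℕ)
    (A : ∀ n : Fin (N+1), Matrix (Fin (R n.castSucc)) (Fin (R n.succ)) ℝ) :
    matChain R A = matChain (fun i => R i.castSucc) (fun n => A n.castSucc) * A (Fin.last N) := by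
  have hprefix : ∀ i : Fin (N+1),
      Fin.induction (motive := fun i => Matrix (Fin (R 0)) (Fin (R i)) ℝ) 1
        (fun n M => M * A n) i.castSucc
      = Fin.induction (motive := fun i => Matrix (Fin (R 0)) (Fin (R i.castSucc)) ℝ)
        (1 : Matrix (Fin (R 0)) (Fin (R 0)) ℝ) (fun n M => M * A n.castSucc) i := by
    intro i
    induction i using Fin.induction with
    | zero => rfl
    | succ n ih =>
      exact (Fin.induction_succ (motive := fun i => Matrix (Fin (R 0)) (Fin (R i)) ℝ) _ _
        n.castSucc).trans ((congrArg (· * A n.castSucc) ih).trans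
        (Fin.induction_succ (motive := fun i => Matrix (Fin (R 0)) (Fin (R i.castSucc)) ℝ)
          (1 : Matrix (Fin (R 0)) (Fin (R 0)) ℝ) (fun n M => M * A n.castSucc) n).symm)
  exact (Fin.induction_succ (motive := fun i => Matrix (Fin (R 0)) (Fin (R i)) ℝ) 1
    (fun n M => M * A n) (Fin.last N)).trans (congrArg (· * A (Fin.last N)) (hprefix (Fin.last N)))

theorem matChain_sum_smul {N : ℕ} (R : Fin (N+1) → ℕ) {K : Fin N → Type*} [∀ n, Fintype (K n)]
    (c : ∀ n, K n → ℝ) (M : ∀ n, K n → Matrix (Fin (R n.castSucc)) (Fin (R n.succ)) ℝ) :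
    matChain R (fun n => ∑ k, c n k • M n k)
      = ∑ y : ∀ n, K n, (∏ n, c n (y n)) • matChain R (fun n => M n (y n)) := by
  induction N with
  | zero => simp [matChain]
  | succ N ih =>
    refine (matChain_succ R _).trans ?_
    rw [ih, ← (Fin.snocEquiv K).sum_comp, Fintype.sum_prod_type_right, Matrix.sum_mul]
    refine Finset.sum_congr rfl fun y _ => ?_
    rw [Matrix.smul_mul, Matrix.mul_sum, Finset.smul_sum]
    refine Finset.sum_congr rfl fun k _ => ?_
    rw [matChain_succ]
    simp only [Fin.snocEquiv_apply, Fin.snoc_castSucc, Fin.snoc_last, Fin.prod_univ_castSucc]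
    rw [Matrix.mul_smul, smul_smul]
    rfl

theorem Fintype.prod_ite_mem_eq_prod_mul_prod_compl {ι M : Type*} [Fintype ι] [DecidableEq ι]
    [CommMonoid M] (s : Finset ι) (f g : ι → M) :
    ∏ i, (if i ∈ s then f i else g i) = (∏ i ∈ s, f i) * ∏ i ∈ sᶜ, g i := by
  rw [← Finset.prod_mul_prod_compl s]
  congr 1
  · exact Finset.prod_congr rfl fun i hi => if_pos hi
  · exact Finset.prod_congr rfl fun i hi => if_neg (Finset.mem_compl.mp hi)

theorem Fintype.sum_powerset_prod_ite_mem {ι R : Type*} [Fintype ι] [DecidableEq ι]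
    [CommSemiring R] (a b : ι → R) (s : Finset ι) :
    ∑ t ∈ s.powerset, ∏ i, (if i ∈ t then a i else b i)
      = ∏ i, (if i ∈ s then a i + b i else b i) := by
  have hsplit : ∀ i, (if i ∈ s then a i + b i else b i) = (if i ∈ s then a i else 0) + b i := by
    intro i; split_ifs <;> simp
  simp only [hsplit, Fintype.prod_add, prod_ite_mem_eq_prod_mul_prod_compl]
  rw [← Finset.sum_subset (Finset.subset_univ s.powerset)]
  · refine Finset.sum_congr rfl fun t ht => ?_
    rw [Finset.prod_congr rfl fun i hi => if_pos (Finset.mem_powerset.mp ht hi)]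
  · intro t _ ht
    obtain ⟨i, hit, his⟩ := Finset.not_subset.mp (mt Finset.mem_powerset.mpr ht)
    rw [Finset.prod_eq_zero hit (if_neg his), zero_mul]

noncomputable def anovaWeight {N : ℕ} {I : Fin N → ℕ} (w : ∀ n : Fin N, Fin (I n) → ℝ)
    (α : Finset (Fin N)) (x : (n : Fin N) → Fin (I n)) (n : Fin N) (k : Fin (I n)) : ℝ :=
  if n ∈ α then (if k = x n then 1 else 0) - w n k else w n k

section Anova

variable {N : ℕ} {I : Fin N → ℕ} (w : ∀ n : Fin N, Fin (I n) → ℝ)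
  (f : ((n : Fin N) → Fin (I n)) → ℝ) (x : (n : Fin N) → Fin (I n))

theorem partialE_eq_sum_prod (β : Finset (Fin N)) :
    partialE w β f x
      = ∑ y, (∏ n, if n ∈ β then (if y n = x n then 1 else 0) else w n (y n)) * f y := by
  rw [partialE, Finset.sum_filter]
  refine Finset.sum_congr rfl fun y _ => ?_
  rw [Fintype.prod_ite_mem_eq_prod_mul_prod_compl, Finset.prod_boole, boole_mul, ite_mul,
    zero_mul]
  congr

theorem anova_eq_of_sum_powerset_eq_partialE (g : Finset (Fin N) → ℝ)
    (hg : ∀ β, ∑ γ ∈ β.powerset, g γ = partialE w β f x) (α : Finset (Fin N)) :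
    anova w f α x = g α := by
  induction α using Finset.strongInduction with
  | H α ih =>
    have hsub : ∀ β ∈ α.powerset.erase α, anova w f β x = g β := fun β hβ =>
      ih β (Finset.ssubset_iff_subset_ne.mpr
        ⟨Finset.mem_powerset.mp (Finset.mem_of_mem_erase hβ), Finset.ne_of_mem_erase hβ⟩)
    rw [anova, Finset.sum_attach (α.powerset.erase α) (fun β => anova w f β x),
      Finset.sum_congr rfl hsub, ← hg α, ← Finset.add_sum_erase _ _ (Finset.mem_powerset_self α),
      add_sub_cancel_right]

theorem anova_eq_sum_prod_anovaWeight (α : Finset (Fin N)) :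
    anova w f α x = ∑ y, (∏ n, anovaWeight w α x n (y n)) * f y := by
  refine anova_eq_of_sum_powerset_eq_partialE w f x
    (fun α => ∑ y, (∏ n, anovaWeight w α x n (y n)) * f y) (fun β => ?_) α
  rw [Finset.sum_comm, partialE_eq_sum_prod]
  simp only [anovaWeight, ← Finset.sum_mul, Fintype.sum_powerset_prod_ite_mem, sub_add_cancel]

end Anova

theorem matChain_sum_smul_apply {N : ℕ} {I : Fin N → ℕ} (R : Fin (N+1) → ℕ)
    (T : ∀ n : Fin N, Fin (I n) → Matrix (Fin (R n.castSucc)) (Fin (R n.succ)) ℝ)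
    (f : ((n : Fin N) → Fin (I n)) → ℝ)
    (hf : ∀ x (i : Fin (R 0)) (j : Fin (R (Fin.last N))), f x = ttProd R T x i j)
    (c : ∀ n, Fin (I n) → ℝ) (i : Fin (R 0)) (j : Fin (R (Fin.last N))) :
    matChain R (fun n => ∑ k, c n k • T n k) i j = ∑ y, (∏ n, c n (y n)) * f y := by
  simp only [matChain_sum_smul, Matrix.sum_apply, Matrix.smul_apply, smul_eq_mul, hf _ i j,
    ttProd]

theorem sobol_tt_cores_represent_anova_term_general
    {N : ℕ} {I : Fin N → ℕ}
    (w : ∀ n : Fin N, Fin (I n) → ℝ)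
    (R : Fin (N+1) → ℕ)
    (T : ∀ n : Fin N, Fin (I n) → Matrix (Fin (R n.castSucc)) (Fin (R n.succ)) ℝ)
    (f : ((n : Fin N) → Fin (I n)) → ℝ)
    (hf : ∀ x (i : Fin (R 0)) (j : Fin (R (Fin.last N))), f x = ttProd R T x i j)
    (α : Finset (Fin N)) (x : (n : Fin N) → Fin (I n))
    (i : Fin (R 0)) (j : Fin (R (Fin.last N))) :
    ttProd R
      (fun n k =>
        if n ∈ α then T n k - ∑ i', w n i' • T n i' else ∑ i', w n i' • T n i')
      x i j
    = anova w f α x := by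
  have hcores : ∀ n, (if n ∈ α then T n (x n) - ∑ k, w n k • T n k else ∑ k, w n k • T n k)
      = ∑ k, anovaWeight w α x n k • T n k := by
    intro n
    by_cases hn : n ∈ α <;> simp [anovaWeight, hn, sub_smul, Finset.sum_sub_distrib, ite_smul]
  rw [ttProd, funext hcores, matChain_sum_smul_apply R T f hf, anova_eq_sum_prod_anovaWeight]

/-- Proposition 1 of the paper: given a TT surrogate
`f(x) = T^(1)[x_1] ⋯ T^(N)[x_N]`, the cores
`T_α^(n)[j] := E[T^(n)]` for `n ∉ α` and `T_α^(n)[j] := T^(n)[j] - E[T^(n)]` for `n ∈ α`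
(with `E[T^(n)] := Σ_i w_n(i) • T^(n)[i]`) represent exactly the ANOVA term `f_α`. -/
theorem sobol_tt_cores_represent_anova_term
    {N : ℕ} (hN : 1 ≤ N) {I : Fin N → ℕ} (hI : ∀ n, 1 ≤ I n)
    (w : ∀ n : Fin N, Fin (I n) → ℝ)
    (hw0 : ∀ n i, 0 ≤ w n i) (hw1 : ∀ n, ∑ i, w n i = 1)
    (R : Fin (N+1) → ℕ) (hR0 : R 0 = 1) (hRN : R (Fin.last N) = 1)
    (T : ∀ n : Fin N, Fin (I n) → Matrix (Fin (R n.castSucc)) (Fin (R n.succ)) ℝ)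
    (f : ((n : Fin N) → Fin (I n)) → ℝ)
    (hf : ∀ x (i : Fin (R 0)) (j : Fin (R (Fin.last N))), f x = ttProd R T x i j)
    (α : Finset (Fin N)) (x : (n : Fin N) → Fin (I n))
    (i : Fin (R 0)) (j : Fin (R (Fin.last N))) :
    ttProd R
      (fun n k =>
        if n ∈ α then T n k - ∑ i', w n i' • T n i' else ∑ i', w n i' • T n i')
      x i j
    = anova w f α x :=
  sobol_tt_cores_represent_anova_term_general w R T f hf α x i j
end

section
/- Let f : ∏_{n=1}^N Fin I_n → ℝ admit a tensor train representation with cores T^(n) : Fin I_n → Matrix (Fin R_{n-1}) (Fin R_n) ℝ (R_0 = R_N = 1), so f(x) = T^(1)[x_1] · ... · T^(N)[x_N]. Define extended cores T_*^(n) : Fin (I_n + 1) → Matrix (Fin R_{n-1}) (Fin R_n) ℝ by T_*^(n)[0] := E[T^(n)] := Σ_i w_n(i)·T^(n)[i] and T_*^(n)[j] := T^(n)[j−1] − E[T^(n)] for j = 1,...,I_n. Then for every subset α ⊆ {1,...,N} and every point x ∈ ∏_n Fin I_n, the matrix product T_*^(1)[j_1] · ... · T_*^(N)[j_N], where j_n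 := 0 if n ∉ α and j_n := x_n + 1 if n ∈ α, equals the ANOVA term f_α(x_α) of f with respect to the product measure w. -/
open Finset

open Finset

/-!
The ordered product of a chain of matrices is multilinear in its factors. Hence the partial
expectation `E_{-β}[f](x)` of a tensor-train function is the chain product with the slices
`T^(n)[x_n]` for `n ∈ β` and the mean cores `E[T^(n)]` elsewhere. Splitting each
`T^(n)[x_n] = (T^(n)[x_n] - E[T^(n)]) + E[T^(n)]` and expanding writes `E_{-β}[f](x)` as
`∑_{γ ⊆ β} g γ`, where `g γ` is the extended-core product at the multi-index determined by `γ`.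
This is exactly the relation that the ANOVA recursion inverts, so `g α = f_α(x_α)`.
-/

section MatChain

variable {N : ℕ} (R : Fin (N+1) → ℕ)

def matChainUpTo (A : ∀ n : Fin N, Matrix (Fin (R n.castSucc)) (Fin (R n.succ)) ℝ)
    (i : Fin (N+1)) : Matrix (Fin (R 0)) (Fin (R i)) ℝ :=
  Fin.induction (motive := fun i => Matrix (Fin (R 0)) (Fin (R i)) ℝ)
    1 (fun n M => M * A n) i

lemma matChainUpTo_succ (A : ∀ n : Fin N, Matrix (Fin (R n.castSucc)) (Fin (R n.succ)) ℝ)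
    (n : Fin N) : matChainUpTo R A n.succ = matChainUpTo R A n.castSucc * A n := by
  simp [matChainUpTo]

-- Arbitrary instance: the axioms of `MultilinearMap` quantify over all of them.
variable [DecidableEq (Fin N)]

lemma matChainUpTo_update_of_le
    (A : ∀ n : Fin N, Matrix (Fin (R n.castSucc)) (Fin (R n.succ)) ℝ) (n : Fin N)
    (X : Matrix (Fin (R n.castSucc)) (Fin (R n.succ)) ℝ) {i : Fin (N+1)} (hi : i ≤ n.castSucc) :
    matChainUpTo R (Function.update A n X) i = matChainUpTo R A i := by
  induction i using Fin.induction with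
  | zero => rfl
  | succ m ih =>
    have hmn : m.castSucc < n.castSucc := (Fin.castSucc_lt_succ).trans_le hi
    rw [matChainUpTo_succ, matChainUpTo_succ, ih hmn.le,
      Function.update_of_ne (Fin.castSucc_lt_castSucc_iff.mp hmn).ne]

lemma exists_linearMap_matChainUpTo_update
    (A : ∀ n : Fin N, Matrix (Fin (R n.castSucc)) (Fin (R n.succ)) ℝ) (n : Fin N)
    {i : Fin (N+1)} (hi : n.castSucc < i) :
    ∃ L : Matrix (Fin (R n.castSucc)) (Fin (R n.succ)) ℝ →ₗ[ℝ] Matrix (Fin (R 0)) (Fin (R i)) ℝ,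
      ∀ X, matChainUpTo R (Function.update A n X) i = L X := by
  induction i using Fin.induction with
  | zero => exact absurd hi (Fin.not_lt_zero _)
  | succ m ih =>
    rcases eq_or_ne m n with rfl | hmn
    · refine ⟨mulLeftLinearMap _ ℝ (matChainUpTo R A m.castSucc), fun X => ?_⟩
      rw [matChainUpTo_succ, matChainUpTo_update_of_le R A m X le_rfl, Function.update_self]
      rfl
    · have hlt : n.castSucc < m.castSucc :=
        Fin.castSucc_lt_castSucc_iff.mpr
          (lt_of_le_of_ne (Fin.castSucc_lt_succ_iff.mp hi) hmn.symm)
      obtain ⟨L, hL⟩ := ih hlt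
      refine ⟨(mulRightLinearMap _ ℝ (A m)).comp L, fun X => ?_⟩
      rw [matChainUpTo_succ, Function.update_of_ne hmn, hL]
      rfl

end MatChain

noncomputable def matChainMultilinear {N : ℕ} (R : Fin (N+1) → ℕ) :
    MultilinearMap ℝ (fun n : Fin N => Matrix (Fin (R n.castSucc)) (Fin (R n.succ)) ℝ)
      (Matrix (Fin (R 0)) (Fin (R (Fin.last N))) ℝ) where
  toFun := matChain R
  map_update_add' A n X Y := by
    obtain ⟨L, hL⟩ := exists_linearMap_matChainUpTo_update R A n (Fin.castSucc_lt_last n)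
    exact (hL (X + Y)).trans ((L.map_add X Y).trans (congrArg₂ (· + ·) (hL X) (hL Y)).symm)
  map_update_smul' A n c X := by
    obtain ⟨L, hL⟩ := exists_linearMap_matChainUpTo_update R A n (Fin.castSucc_lt_last n)
    exact (hL (c • X)).trans ((L.map_smul c X).trans (congrArg (c • ·) (hL X)).symm)

lemma partialE_multilinearMap {N : ℕ} {I : Fin N → ℕ} {M : Fin N → Type*}
    [∀ n, AddCommMonoid (M n)] [∀ n, Module ℝ (M n)] (Φ : MultilinearMap ℝ M ℝ)
    (w : ∀ n : Fin N, Fin (I n) → ℝ) (T : ∀ n : Fin N, Fin (I n) → M n)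
    (β : Finset (Fin N)) (x : (n : Fin N) → Fin (I n)) :
    partialE w β (fun y => Φ (fun n => T n (y n))) x
      = Φ (β.piecewise (fun n => T n (x n)) (fun n => ∑ i, w n i • T n i)) := by
  set s : ∀ n, Finset (Fin (I n)) := fun n => if n ∈ β then {x n} else univ
  set c : ∀ n, Fin (I n) → ℝ := fun n i => if n ∈ β then 1 else w n i
  have hslices : β.piecewise (fun n => T n (x n)) (fun n => ∑ i, w n i • T n i)
      = fun n => ∑ i ∈ s n, c n i • T n i := by
    funext n
    by_cases hn : n ∈ β <;> simp [s, c, hn]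
  have hagree : univ.filter (fun y : (n : Fin N) → Fin (I n) => ∀ m ∈ β, y m = x m)
      = Fintype.piFinset s := by
    ext y
    simp only [mem_filter, mem_univ, true_and, Fintype.mem_piFinset, s]
    refine ⟨fun h n => ?_, fun h n hn => by simpa [hn] using h n⟩
    by_cases hn : n ∈ β <;> simp [hn, h]
  rw [hslices, Φ.map_sum_finset, partialE, hagree]
  refine sum_congr rfl fun y _ => ?_
  rw [Φ.map_smul_univ, smul_eq_mul]
  congr 1
  rw [← prod_compl_mul_prod β, prod_eq_one fun n hn => if_pos hn, mul_one]
  exact prod_congr rfl fun n hn => (if_neg (mem_compl.mp hn)).symm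

lemma anova_eq_of_partialE_eq_sum_powerset {N : ℕ} {I : Fin N → ℕ}
    (w : ∀ n : Fin N, Fin (I n) → ℝ) (f : ((n : Fin N) → Fin (I n)) → ℝ)
    (x : (n : Fin N) → Fin (I n)) (g : Finset (Fin N) → ℝ)
    (h : ∀ β, partialE w β f x = ∑ γ ∈ β.powerset, g γ) (α : Finset (Fin N)) :
    anova w f α x = g α := by
  induction α using Finset.strongInduction with
  | H α ih =>
    have hproper : ∑ β ∈ α.powerset.erase α, anova w f β x = ∑ β ∈ α.powerset.erase α, g β :=
      sum_congr rfl fun β hβ =>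
        ih β (lt_of_le_of_ne (mem_powerset.mp (mem_of_mem_erase hβ)) (ne_of_mem_erase hβ))
    rw [anova, sum_attach (α.powerset.erase α) (fun β => anova w f β x), hproper, h α,
      ← sum_erase_add _ _ (mem_powerset_self α), add_sub_cancel_left]

theorem extended_tt_cores_encode_all_anova_terms_general
    {N : ℕ} {I : Fin N → ℕ}
    (w : ∀ n : Fin N, Fin (I n) → ℝ)
    (R : Fin (N+1) → ℕ)
    (T : ∀ n : Fin N, Fin (I n) → Matrix (Fin (R n.castSucc)) (Fin (R n.succ)) ℝ)
    (f : ((n : Fin N) → Fin (I n)) → ℝ)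
    (hf : ∀ x (i : Fin (R 0)) (j : Fin (R (Fin.last N))), f x = ttProd R T x i j)
    (α : Finset (Fin N)) (x : (n : Fin N) → Fin (I n))
    (i : Fin (R 0)) (j : Fin (R (Fin.last N))) :
    ttProd (I := fun n => I n + 1) R
      (fun n k =>
        if h : k = 0 then ∑ i', w n i' • T n i'
        else T n (k.pred h) - ∑ i', w n i' • T n i')
      (fun n => if n ∈ α then (x n).succ else 0)
      i j
    = anova w f α x := by
  set mean := fun n => ∑ i', w n i' • T n i'
  set centered := fun n => T n (x n) - mean n
  set Φ := (Matrix.entryLinearMap ℝ ℝ i j).compMultilinearMap (matChainMultilinear R)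
  have hslices : (fun n => if h : ((if n ∈ α then (x n).succ else 0 : Fin (I n + 1))) = 0
        then mean n else T n (Fin.pred _ h) - mean n) = α.piecewise centered mean := by
    funext n
    by_cases hn : n ∈ α <;> simp [hn, centered, Fin.succ_ne_zero]
  have hΦ : f = fun y => Φ (fun n => T n (y n)) := funext fun y => hf y i j
  -- `ttProd` unfolds to `matChain` of the selected slices, i.e. `Φ` of them.
  change Φ _ = _
  rw [hslices]
  refine (anova_eq_of_partialE_eq_sum_powerset w f x
    (fun γ => Φ (γ.piecewise centered mean)) (fun β => ?_) α).symm
  have hsplit : β.piecewise (fun n => T n (x n)) mean = β.piecewise (centered + mean) mean := by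
    congr 1
    funext n
    exact (sub_add_cancel _ _).symm
  rw [hΦ, partialE_multilinearMap, hsplit, Φ.map_piecewise_add]

/-- the extended cores `T_*^(n)` with first slice `E[T^(n)]` and slices
`T^(n)[j-1] - E[T^(n)]` for `j = 1, ..., I_n`, evaluated at `j_n = 0` for `n ∉ α` and
`j_n = x_n + 1` for `n ∈ α`, reproduce the ANOVA term `f_α(x_α)`. -/
theorem extended_tt_cores_encode_all_anova_terms
    {N : ℕ} (hN : 1 ≤ N) {I : Fin N → ℕ} (hI : ∀ n, 1 ≤ I n)
    (w : ∀ n : Fin N, Fin (I n) → ℝ)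
    (hw0 : ∀ n i, 0 ≤ w n i) (hw1 : ∀ n, ∑ i, w n i = 1)
    (R : Fin (N+1) → ℕ) (hR0 : R 0 = 1) (hRN : R (Fin.last N) = 1)
    (T : ∀ n : Fin N, Fin (I n) → Matrix (Fin (R n.castSucc)) (Fin (R n.succ)) ℝ)
    (f : ((n : Fin N) → Fin (I n)) → ℝ)
    (hf : ∀ x (i : Fin (R 0)) (j : Fin (R (Fin.last N))), f x = ttProd R T x i j)
    (α : Finset (Fin N)) (x : (n : Fin N) → Fin (I n))
    (i : Fin (R 0)) (j : Fin (R (Fin.last N))) :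
    ttProd (I := fun n => I n + 1) R
      (fun n k =>
        if h : k = 0 then ∑ i', w n i' • T n i'
        else T n (k.pred h) - ∑ i', w n i' • T n i')
      (fun n => if n ∈ α then (x n).succ else 0)
      i j
    = anova w f α x :=
  extended_tt_cores_encode_all_anova_terms_general w R T f hf α x i j
end

section
/- For any f : ∏_{n=1}^N Fin I_n → ℝ, the ANOVA terms are mutually orthogonal with respect to the product measure w: for all subsets α ≠ β of {1,...,N}, E[f_α · f_β] = Σ_x w(x) f_α(x_α) f_β(x_β) = 0. -/
open Finset

/-!
Two facts about the ANOVA terms drive the proof. First, `E_{-α}[f] = Σ_{β ⊆ α} f_β`, which is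
the defining recursion read backwards. Second, `f_α` has zero mean in each of its own
coordinates `n ∈ α`: averaging `E_{-α}[f]` over `x_n` gives `E_{-(α \ {n})}[f]`, whose expansion
cancels exactly the terms `f_β` with `n ∉ β`, and the terms with `n ∈ β ⊊ α` vanish by strong
induction. Now if `α ≠ β`, some coordinate `n` lies in one of them but not in the other, say
`n ∈ β \ α`. Averaging over `x_n` first does not change `E[f_α f_β]`, and since `f_α` does not
depend on `x_n`, that average is `f_α` times the mean of `f_β` in `x_n`, which is zero.
-/

section Tower

variable {ι R : Type*} [Fintype ι] [DecidableEq ι] [CommSemiring R] {X : ι → Type*}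
  [∀ i, Fintype (X i)] (w : ∀ i, X i → R)

theorem sum_prod_mul_eq_sum_prod_mul_sum_update {n : ι} (hw : ∑ i, w n i = 1)
    (g : (∀ i, X i) → R) :
    ∑ x, (∏ m, w m (x m)) * g x =
      ∑ x, (∏ m, w m (x m)) * ∑ i, w n i * g (Function.update x n i) := by
  set Q : (∀ i, X i) → R := fun x => ∏ m ∈ univ.erase n, w m (x m)
  have hprod : ∀ x : ∀ i, X i, ∏ m, w m (x m) = w n (x n) * Q x := fun x =>
    (mul_prod_erase univ (fun m => w m (x m)) (mem_univ n)).symm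
  have hQ_update : ∀ x i, Q (Function.update x n i) = Q x := fun x i =>
    prod_congr rfl fun m hm => by rw [Function.update_of_ne (ne_of_mem_erase hm)]
  set φ : (∀ i, X i) × X n → (∀ i, X i) × X n := fun p => (Function.update p.1 n p.2, p.1 n)
  have hφ : Function.Involutive φ := fun p => by simp [φ]
  calc ∑ x, (∏ m, w m (x m)) * g x
      = ∑ p : (∀ i, X i) × X n, w n p.2 * (w n (p.1 n) * Q p.1 * g p.1) := by
        simp only [Fintype.sum_prod_type, ← sum_mul, hw, one_mul, hprod]
    _ = ∑ p : (∀ i, X i) × X n, w n (φ p).2 * (w n ((φ p).1 n) * Q (φ p).1 * g (φ p).1) :=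
        (Fintype.sum_bijective φ hφ.bijective _ _ fun _ => rfl).symm
    _ = ∑ x, (∏ m, w m (x m)) * ∑ i, w n i * g (Function.update x n i) := by
        simp only [φ, Function.update_self, hQ_update, Fintype.sum_prod_type, hprod, mul_sum]
        exact sum_congr rfl fun x _ => sum_congr rfl fun i _ => by ring

end Tower

theorem forall_mem_eq_update_iff {ι : Type*} [DecidableEq ι] {X : ι → Type*} {s : Finset ι}
    {n : ι} (hn : n ∈ s) (x y : ∀ i, X i) (a : X n) :
    (∀ m ∈ s, y m = Function.update x n a m) ↔ (∀ m ∈ s.erase n, y m = x m) ∧ y n = a := by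
  refine ⟨fun h => ⟨fun m hm => ?_, by simpa using h n hn⟩, fun ⟨h, hyn⟩ m hm => ?_⟩
  · simpa [Function.update_of_ne (ne_of_mem_erase hm)] using h m (mem_of_mem_erase hm)
  · obtain rfl | hmn := eq_or_ne m n
    · simpa using hyn
    · simpa [Function.update_of_ne hmn] using h m (mem_erase.2 ⟨hmn, hm⟩)

section Anova

variable {N : ℕ} {I : Fin N → ℕ} (w : ∀ n : Fin N, Fin (I n) → ℝ)
  (f : ((n : Fin N) → Fin (I n)) → ℝ)

theorem anova_eq (α : Finset (Fin N)) (x : (n : Fin N) → Fin (I n)) :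
    anova w f α x = partialE w α f x - ∑ β ∈ α.ssubsets, anova w f β x := by
  rw [anova]
  exact congrArg (partialE w α f x - ·) (sum_attach α.ssubsets fun β => anova w f β x)

theorem partialE_eq_sum_powerset_anova (α : Finset (Fin N)) (x : (n : Fin N) → Fin (I n)) :
    partialE w α f x = ∑ β ∈ α.powerset, anova w f β x := by
  rw [← insert_erase (mem_powerset_self α), sum_insert (notMem_erase _ _), anova_eq, ssubsets]
  ring

theorem partialE_congr (α : Finset (Fin N)) {x y : (n : Fin N) → Fin (I n)}
    (hxy : ∀ m ∈ α, x m = y m) : partialE w α f x = partialE w α f y := by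
  unfold partialE
  congr 1
  exact filter_congr fun z _ => forall₂_congr fun m hm => by rw [hxy m hm]

theorem anova_congr (α : Finset (Fin N)) {x y : (n : Fin N) → Fin (I n)}
    (hxy : ∀ m ∈ α, x m = y m) : anova w f α x = anova w f α y := by
  induction α using Finset.strongInduction generalizing x y with
  | _ α ih =>
    rw [anova_eq, anova_eq, partialE_congr w f α hxy]
    congr 1
    refine sum_congr rfl fun β hβ => ?_
    have hβα : β ⊂ α := mem_ssubsets.1 hβ
    exact ih β hβα fun m hm => hxy m (hβα.subset hm)

theorem anova_update_of_notMem {α : Finset (Fin N)} {n : Fin N} (hn : n ∉ α)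
    (x : (n : Fin N) → Fin (I n)) (i : Fin (I n)) :
    anova w f α (Function.update x n i) = anova w f α x :=
  anova_congr w f α fun _ hm => Function.update_of_ne (ne_of_mem_of_not_mem hm hn) _ _

theorem sum_mul_partialE_update {α : Finset (Fin N)} {n : Fin N} (hn : n ∈ α)
    (x : (n : Fin N) → Fin (I n)) :
    ∑ i, w n i * partialE w α f (Function.update x n i) = partialE w (α.erase n) f x := by
  unfold partialE
  simp only [forall_mem_eq_update_iff hn, ← filter_filter, mul_sum]
  rw [compl_erase, ← sum_fiberwise _ fun y : (m : Fin N) → Fin (I m) => y n]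
  refine sum_congr rfl fun i _ => sum_congr rfl fun y hy => ?_
  rw [prod_insert (notMem_compl.2 hn), (mem_filter.1 hy).2, mul_assoc]

theorem filter_notMem_ssubsets {α : Finset (Fin N)} {n : Fin N} (hn : n ∈ α) :
    α.ssubsets.filter (n ∉ ·) = (α.erase n).powerset := by
  ext β
  rw [mem_filter, mem_ssubsets, mem_powerset, subset_erase]
  exact ⟨fun ⟨hβα, hnβ⟩ => ⟨hβα.subset, hnβ⟩,
    fun ⟨hβα, hnβ⟩ => ⟨ssubset_of_subset_of_ne hβα (by rintro rfl; exact hnβ hn), hnβ⟩⟩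

theorem sum_mul_anova_update_eq_zero (hw : ∀ n, ∑ i, w n i = 1) {α : Finset (Fin N)}
    {n : Fin N} (hn : n ∈ α) (x : (n : Fin N) → Fin (I n)) :
    ∑ i, w n i * anova w f α (Function.update x n i) = 0 := by
  induction α using Finset.strongInduction generalizing x with
  | _ α ih =>
    have hssubsets : ∀ β ∈ α.ssubsets, ∑ i, w n i * anova w f β (Function.update x n i) =
        if n ∈ β then 0 else anova w f β x := by
      intro β hβ
      split_ifs with hnβ
      · exact ih β (mem_ssubsets.1 hβ) hnβ x
      · simp only [anova_update_of_notMem w f hnβ, ← sum_mul, hw, one_mul]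
    simp only [anova_eq w f α, mul_sub, sum_sub_distrib, mul_sum]
    rw [sum_mul_partialE_update w f hn, partialE_eq_sum_powerset_anova, sum_comm,
      sum_congr rfl hssubsets, sum_ite, sum_const_zero, zero_add, filter_notMem_ssubsets hn,
      sub_self]

end Anova

theorem anova_orthogonal_general
    {N : ℕ} {I : Fin N → ℕ}
    (w : ∀ n : Fin N, Fin (I n) → ℝ)
    (hw1 : ∀ n, ∑ i, w n i = 1)
    (f : ((n : Fin N) → Fin (I n)) → ℝ)
    (α β : Finset (Fin N)) (hαβ : α ≠ β) :
    ∑ x : (n : Fin N) → Fin (I n),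
      (∏ n, w n (x n)) * (anova w f α x * anova w f β x) = 0 := by
  wlog hβα : ¬β ⊆ α generalizing α β
  · have hαβ' : ¬α ⊆ β := fun h => hαβ (h.antisymm (not_not.1 hβα))
    simpa only [mul_comm (anova w f α _)] using this β α hαβ.symm hαβ'
  obtain ⟨n, hnβ, hnα⟩ := not_subset.1 hβα
  rw [sum_prod_mul_eq_sum_prod_mul_sum_update w (hw1 n)]
  refine sum_eq_zero fun x _ => ?_
  simp only [anova_update_of_notMem w f hnα, mul_left_comm (w n _), ← mul_sum,
    sum_mul_anova_update_eq_zero w f hw1 hnβ, mul_zero]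

/-- distinct ANOVA terms are orthogonal with respect to the product
measure: `E[f_α · f_β] = 0` for `α ≠ β`. -/
theorem anova_orthogonal
    {N : ℕ} (hN : 1 ≤ N) {I : Fin N → ℕ} (hI : ∀ n, 1 ≤ I n)
    (w : ∀ n : Fin N, Fin (I n) → ℝ)
    (hw0 : ∀ n i, 0 ≤ w n i) (hw1 : ∀ n, ∑ i, w n i = 1)
    (f : ((n : Fin N) → Fin (I n)) → ℝ)
    (α β : Finset (Fin N)) (hαβ : α ≠ β) :
    ∑ x : (n : Fin N) → Fin (I n),
      (∏ n, w n (x n)) * (anova w f α x * anova w f β x) = 0 :=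
  anova_orthogonal_general w hw1 f α β hαβ
end

section
/- For any f : ∏_{n=1}^N Fin I_n → ℝ with positive total variance D := E[f²] − (E[f])² > 0, the Sobol indices S_α := D_α / D (with D_α := E[f_α²]) satisfy Σ over all nonempty α ⊆ {1,...,N} of S_α = 1. -/
open Finset

/-! The ANOVA terms of `f` sum to `f` (telescoping the recursion at `α = univ`), and they are
orthogonal for the product weights: `f_α` has zero mean in each variable `m ∈ α`, while for
`β ∌ m` the term `f_β` does not depend on `x m`, so averaging over `x m` first kills
`E[f_α f_β]`. Expanding `E[f²] = E[(Σ_α f_α)²]` therefore gives `Σ_α E[f_α²]`, and removing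
`E[f_∅²] = (E f)²` leaves the variance `D`. -/

theorem Finset.filter_notMem_ssubsets {ι : Type*} [DecidableEq ι] {α : Finset ι}
    {m : ι} (hm : m ∈ α) : α.ssubsets.filter (m ∉ ·) = (α.erase m).powerset := by
  ext β
  simp only [Finset.mem_filter, Finset.mem_ssubsets, Finset.mem_powerset, Finset.subset_erase]
  exact ⟨fun ⟨hβα, hmβ⟩ => ⟨hβα.subset, hmβ⟩,
    fun ⟨hβα, hmβ⟩ => ⟨Finset.ssubset_iff_subset_ne.mpr ⟨hβα, fun h => hmβ (h ▸ hm)⟩, hmβ⟩⟩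

namespace ANOVA

section ProductWeights

variable {ι : Type*} [Fintype ι] [DecidableEq ι] {X : ι → Type*} [∀ i, Fintype (X i)]
  (w : ∀ i, X i → ℝ)

noncomputable def mean (g : (∀ i, X i) → ℝ) : ℝ :=
  ∑ x, (∏ i, w i (x i)) * g x

theorem mean_sum {κ : Type*} (s : Finset κ) (g : κ → (∀ i, X i) → ℝ) :
    mean w (fun x => ∑ k ∈ s, g k x) = ∑ k ∈ s, mean w (g k) := by
  simp only [mean, Finset.mul_sum]
  exact Finset.sum_comm

theorem mean_const (hw : ∀ i, ∑ a, w i a = 1) (c : ℝ) : mean w (fun _ => c) = c := by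
  rw [mean, ← Finset.sum_mul, ← Fintype.prod_sum]
  simp [hw]

/-- Fubini at one coordinate: `(x, a) ↦ (update x m a, x m)` is an involution exchanging
the two sides, once the weight of coordinate `m` is split off. -/
theorem mean_average (m : ι) (hwm : ∑ a, w m a = 1) (g : (∀ i, X i) → ℝ) :
    mean w (fun x => ∑ a, w m a * g (Function.update x m a)) = mean w g := by
  set W : (∀ i, X i) → ℝ := fun x => ∏ i ∈ {m}ᶜ, w i (x i)
  have hW : ∀ x a, W (Function.update x m a) = W x := fun x a =>
    Finset.prod_congr rfl fun i hi => by
      rw [Function.update_of_ne (by simpa using hi)]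
  have hprod : ∀ x : ∀ i, X i, ∏ i, w i (x i) = w m (x m) * W x := fun x =>
    Fintype.prod_eq_mul_prod_compl m _
  have hinv : Function.Involutive fun p : (∀ i, X i) × X m =>
      (Function.update p.1 m p.2, p.1 m) := fun p => by simp
  calc mean w (fun x => ∑ a, w m a * g (Function.update x m a))
      = ∑ p : (∀ i, X i) × X m,
          W p.1 * w m (p.1 m) * w m p.2 * g (Function.update p.1 m p.2) := by
        simp only [mean, Fintype.sum_prod_type, Finset.mul_sum, hprod]
        exact Finset.sum_congr rfl fun x _ => Finset.sum_congr rfl fun a _ => by ring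
    _ = ∑ p : (∀ i, X i) × X m, W p.1 * w m p.2 * w m (p.1 m) * g p.1 := by
        refine (Fintype.sum_equiv hinv.toPerm _ _ fun p => ?_)
        simp [hW]
    _ = mean w g := by
        simp only [mean, Fintype.sum_prod_type, hprod, ← Finset.sum_mul, ← Finset.mul_sum, hwm]
        exact Finset.sum_congr rfl fun x _ => by ring

end ProductWeights

section Kernel

variable {ι : Type*} [Fintype ι] [DecidableEq ι] {X : ι → Type*} [∀ i, DecidableEq (X i)]
  (w : ∀ i, X i → ℝ)

/-- The kernel of `E_{-α}`: a point mass at `x` on the coordinates in `α`, the weights `w`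
on the others. -/
def condKernel (α : Finset ι) (x y : ∀ i, X i) : ℝ :=
  ∏ i, if i ∈ α then (if y i = x i then 1 else 0) else w i (y i)

theorem condKernel_congr {α : Finset ι} {x x' : ∀ i, X i} (h : ∀ i ∈ α, x i = x' i)
    (y : ∀ i, X i) : condKernel w α x y = condKernel w α x' y :=
  Finset.prod_congr rfl fun i _ => by split_ifs with hi <;> simp_all

theorem sum_mul_condKernel_update [∀ i, Fintype (X i)] {α : Finset ι} {m : ι} (hm : m ∈ α)
    (x y : ∀ i, X i) :
    ∑ a, w m a * condKernel w α (Function.update x m a) y = condKernel w (α.erase m) x y := by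
  have hrest : ∀ a, ∏ i ∈ {m}ᶜ, (if i ∈ α then (if y i = Function.update x m a i then 1 else 0)
      else w i (y i)) = ∏ i ∈ {m}ᶜ, (if i ∈ α.erase m then (if y i = x i then 1 else 0)
      else w i (y i)) := fun a => Finset.prod_congr rfl fun i hi => by
    have him : i ≠ m := by simpa using hi
    simp [him]
  simp [condKernel, Fintype.prod_eq_mul_prod_compl m, hrest, hm]

theorem condKernel_empty (x y : ∀ i, X i) : condKernel w ∅ x y = ∏ i, w i (y i) := by
  simp [condKernel]

theorem condKernel_univ (x y : ∀ i, X i) :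
    condKernel w Finset.univ x y = if y = x then 1 else 0 := by
  simp [condKernel, Finset.prod_boole, funext_iff]

end Kernel

variable {N : ℕ} {I : Fin N → ℕ} (w : ∀ n : Fin N, Fin (I n) → ℝ)
  (f : ((n : Fin N) → Fin (I n)) → ℝ)

theorem partialE_eq_sum_condKernel (α : Finset (Fin N)) (x : (n : Fin N) → Fin (I n)) :
    partialE w α f x = ∑ y, condKernel w α x y * f y := by
  rw [partialE, Finset.sum_filter]
  refine Finset.sum_congr rfl fun y _ => ?_
  rw [condKernel, Finset.prod_ite, Finset.prod_boole]
  simp [Finset.filter_not, Finset.compl_eq_univ_sdiff]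

theorem partialE_congr {α : Finset (Fin N)} {x x' : (n : Fin N) → Fin (I n)}
    (h : ∀ m ∈ α, x m = x' m) : partialE w α f x = partialE w α f x' := by
  simp only [partialE_eq_sum_condKernel, condKernel_congr w h]

theorem sum_mul_partialE_update {α : Finset (Fin N)} {m : Fin N} (hm : m ∈ α)
    (x : (n : Fin N) → Fin (I n)) :
    ∑ a, w m a * partialE w α f (Function.update x m a) = partialE w (α.erase m) f x := by
  simp only [partialE_eq_sum_condKernel, Finset.mul_sum, ← mul_assoc]
  rw [Finset.sum_comm]
  simp only [← Finset.sum_mul, sum_mul_condKernel_update w hm]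

theorem partialE_empty (x : (n : Fin N) → Fin (I n)) : partialE w ∅ f x = mean w f := by
  simp [partialE_eq_sum_condKernel, condKernel_empty, mean]

theorem partialE_univ (x : (n : Fin N) → Fin (I n)) : partialE w Finset.univ f x = f x := by
  simp [partialE_eq_sum_condKernel, condKernel_univ]

theorem anova_eq_partialE_sub (α : Finset (Fin N)) (x : (n : Fin N) → Fin (I n)) :
    anova w f α x = partialE w α f x - ∑ β ∈ α.ssubsets, anova w f β x := by
  rw [anova]
  exact congrArg _ (Finset.sum_attach α.ssubsets fun β => anova w f β x)

theorem sum_powerset_anova (α : Finset (Fin N)) (x : (n : Fin N) → Fin (I n)) :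
    ∑ β ∈ α.powerset, anova w f β x = partialE w α f x := by
  rw [← Finset.add_sum_erase _ _ (Finset.mem_powerset_self α), anova_eq_partialE_sub]
  exact sub_add_cancel _ _

theorem sum_anova (x : (n : Fin N) → Fin (I n)) : ∑ α, anova w f α x = f x := by
  rw [← Finset.powerset_univ, sum_powerset_anova, partialE_univ]

theorem anova_empty (x : (n : Fin N) → Fin (I n)) : anova w f ∅ x = mean w f := by
  simpa using sum_powerset_anova w f ∅ x |>.trans (partialE_empty w f x)

theorem anova_congr (α : Finset (Fin N)) {x x' : (n : Fin N) → Fin (I n)}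
    (h : ∀ m ∈ α, x m = x' m) : anova w f α x = anova w f α x' := by
  induction α using Finset.strongInduction with
  | H α ih =>
    rw [anova_eq_partialE_sub, anova_eq_partialE_sub, partialE_congr w f h]
    congr 1
    refine Finset.sum_congr rfl fun β hβ => ?_
    have hβα : β ⊂ α := Finset.mem_ssubsets.mp hβ
    exact ih β hβα fun m hm => h m (hβα.subset hm)

theorem anova_update_of_notMem {β : Finset (Fin N)} {m : Fin N} (hm : m ∉ β)
    (x : (n : Fin N) → Fin (I n)) (a : Fin (I m)) :
    anova w f β (Function.update x m a) = anova w f β x :=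
  anova_congr w f β fun _ hk => Function.update_of_ne (ne_of_mem_of_not_mem hk hm) _ _

theorem sum_mul_anova_update {m : Fin N} (hwm : ∑ a, w m a = 1) {α : Finset (Fin N)}
    (hm : m ∈ α) (x : (n : Fin N) → Fin (I n)) :
    ∑ a, w m a * anova w f α (Function.update x m a) = 0 := by
  induction α using Finset.strongInduction with
  | H α ih =>
  -- the proper subsets containing `m` average to zero, the others do not depend on `x m`
  have hsub : ∀ β ∈ α.ssubsets, ∑ a, w m a * anova w f β (Function.update x m a)
      = if m ∉ β then anova w f β x else 0 := fun β hβ => by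
    split_ifs with hmβ
    · exact ih β (Finset.mem_ssubsets.mp hβ) hmβ
    · simp only [anova_update_of_notMem w f hmβ, ← Finset.sum_mul, hwm, one_mul]
  calc ∑ a, w m a * anova w f α (Function.update x m a)
      = ∑ a, w m a * partialE w α f (Function.update x m a)
        - ∑ β ∈ α.ssubsets, ∑ a, w m a * anova w f β (Function.update x m a) := by
        simp only [anova_eq_partialE_sub w f α, mul_sub, Finset.mul_sum, Finset.sum_sub_distrib]
        rw [Finset.sum_comm]
    _ = partialE w (α.erase m) f x - ∑ β ∈ (α.erase m).powerset, anova w f β x := by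
        rw [sum_mul_partialE_update w f hm, Finset.sum_congr rfl hsub, ← Finset.sum_filter,
          Finset.filter_notMem_ssubsets hm]
    _ = 0 := by rw [sum_powerset_anova, sub_self]

theorem mean_anova_mul_eq_zero (hw : ∀ n, ∑ a, w n a = 1) {α β : Finset (Fin N)}
    (hne : α ≠ β) : mean w (fun x => anova w f α x * anova w f β x) = 0 := by
  have key : ∀ {γ δ : Finset (Fin N)} {m : Fin N}, m ∈ γ → m ∉ δ →
      mean w (fun x => anova w f γ x * anova w f δ x) = 0 := fun {γ δ m} hmγ hmδ => by
    rw [← mean_average w m (hw m)]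
    simp only [anova_update_of_notMem w f hmδ, ← mul_assoc, ← Finset.sum_mul,
      sum_mul_anova_update w f (hw m) hmγ, zero_mul]
    simp [mean]
  obtain ⟨m, hmα, hmβ⟩ | ⟨m, hmβ, hmα⟩ : (∃ m ∈ α, m ∉ β) ∨ ∃ m ∈ β, m ∉ α := by
    by_contra! h
    exact hne (Finset.Subset.antisymm h.1 h.2)
  · exact key hmα hmβ
  · simpa only [mul_comm] using key hmβ hmα

theorem mean_sq_eq_sum_mean_anova_sq (hw : ∀ n, ∑ a, w n a = 1) :
    mean w (fun x => f x ^ 2) = ∑ α, mean w (fun x => anova w f α x ^ 2) := by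
  calc mean w (fun x => f x ^ 2)
      = mean w (fun x => ∑ α, ∑ β, anova w f α x * anova w f β x) := by
        simp only [← Finset.sum_mul_sum, ← sq, sum_anova]
    _ = ∑ α, ∑ β, mean w (fun x => anova w f α x * anova w f β x) := by
        simp only [mean_sum]
    _ = ∑ α, mean w (fun x => anova w f α x ^ 2) := Finset.sum_congr rfl fun α _ => by
        rw [Finset.sum_eq_single α (fun β _ hβα => mean_anova_mul_eq_zero w f hw hβα.symm)
          (by simp)]
        simp only [sq]

theorem mean_anova_empty_sq (hw : ∀ n, ∑ a, w n a = 1) :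
    mean w (fun x => anova w f ∅ x ^ 2) = mean w f ^ 2 := by
  simp only [anova_empty]
  exact mean_const w hw _

end ANOVA

theorem sobol_indices_sum_to_one_general
    {N : ℕ} {I : Fin N → ℕ}
    (w : ∀ n : Fin N, Fin (I n) → ℝ)
    (hw1 : ∀ n, ∑ i, w n i = 1)
    (f : ((n : Fin N) → Fin (I n)) → ℝ)
    (D : ℝ)
    (hD : D = (∑ x : (n : Fin N) → Fin (I n), (∏ n, w n (x n)) * f x ^ 2)
      - (∑ x : (n : Fin N) → Fin (I n), (∏ n, w n (x n)) * f x) ^ 2)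
    (hDpos : 0 < D) :
    ∑ α ∈ (Finset.univ : Finset (Finset (Fin N))).erase ∅,
      (∑ x : (n : Fin N) → Fin (I n), (∏ n, w n (x n)) * anova w f α x ^ 2) / D
    = 1 := by
  have hvar : ∑ α ∈ Finset.univ.erase ∅, ANOVA.mean w (fun x => anova w f α x ^ 2) = D := by
    rw [Finset.sum_erase_eq_sub (Finset.mem_univ ∅),
      ← ANOVA.mean_sq_eq_sum_mean_anova_sq w f hw1, ANOVA.mean_anova_empty_sq w f hw1, hD]
    rfl
  rw [← Finset.sum_div, div_eq_one_iff_eq hDpos.ne']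
  exact hvar

/-- if the total variance `D = E[f²] - (E[f])²` is positive, the Sobol
indices `S_α = D_α / D` over all nonempty `α` sum to `1`. -/
theorem sobol_indices_sum_to_one
    {N : ℕ} (hN : 1 ≤ N) {I : Fin N → ℕ} (hI : ∀ n, 1 ≤ I n)
    (w : ∀ n : Fin N, Fin (I n) → ℝ)
    (hw0 : ∀ n i, 0 ≤ w n i) (hw1 : ∀ n, ∑ i, w n i = 1)
    (f : ((n : Fin N) → Fin (I n)) → ℝ)
    (D : ℝ)
    (hD : D = (∑ x : (n : Fin N) → Fin (I n), (∏ n, w n (x n)) * f x ^ 2)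
      - (∑ x : (n : Fin N) → Fin (I n), (∏ n, w n (x n)) * f x) ^ 2)
    (hDpos : 0 < D) :
    ∑ α ∈ (Finset.univ : Finset (Finset (Fin N))).erase ∅,
      (∑ x : (n : Fin N) → Fin (I n), (∏ n, w n (x n)) * anova w f α x ^ 2) / D
    = 1 :=
  sobol_indices_sum_to_one_general w hw1 f D hD hDpos
end

section
/- Let A : ({0,1})^N → ℝ be a tensor given in tensor train format by cores A^(n) : Fin 2 → Matrix (Fin R_{n-1}) (Fin R_n) ℝ (R_0 = R_N = 1), so A[j_1,...,j_N] = A^(1)[j_1] · ... · A^(N)[j_N]. Define new cores B^(n) by B^(n)[0] := A^(n)[0] + A^(n)[1] and B^(n)[1] := A^(n)[1]. Then the tensor B represented by the cores B^(n) satisfies, for every α ⊆ {1,...,N} (identified with its indicator vector in {0,1}^N), B_α = Σ_{β ⊇ α} A_β; i.e., the transformed tensor train represents exactly the superset aggregation of A. -/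
/-!
The new cores are `B⁽ⁿ⁾[k] = ∑_{l ≥ k} A⁽ⁿ⁾[l]`. The chain product is multilinear in its factors,
so `B` at `ind α` expands into the sum of `A` over all tuples `x ≥ ind α` coordinatewise, and
these tuples are exactly the indicator vectors of the supersets of `α`.
-/

open Finset

/-- The binary tuple (indicator vector) associated to a subset `α ⊆ {1,...,N}`:
`j_n = 1` iff `n ∈ α`. -/
def ind {N : ℕ} (α : Finset (Fin N)) : Fin N → Fin 2 :=
  fun n => if n ∈ α then 1 else 0

theorem matChain_sum {N : ℕ} {ι : Fin N → Type*} (R : Fin (N+1) → ℕ) (s : ∀ n, Finset (ι n))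
    (T : ∀ n, ι n → Matrix (Fin (R n.castSucc)) (Fin (R n.succ)) ℝ) :
    matChain R (fun n => ∑ k ∈ s n, T n k) =
      ∑ x ∈ Fintype.piFinset s, matChain R (fun n => T n (x n)) := by
  induction N with
  | zero =>
    rw [Fintype.piFinset_of_isEmpty, Fintype.sum_unique]
    exact congrArg (matChain R) (funext fun n => n.elim0)
  | succ N ih =>
    have piFinset_eq : Fintype.piFinset s =
        (s (Fin.last N) ×ˢ Fintype.piFinset (Fin.init s)).map (Fin.snocEquiv ι).toEmbedding := by
      simpa using filter_piFinset_eq_map_snocEquiv s (fun _ => True)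
    rw [piFinset_eq, sum_map, sum_product_right]
    refine (matChain_succ R _).trans ?_
    rw [ih]
    refine (Matrix.sum_mul _ _ _).trans (sum_congr rfl fun x _ => ?_)
    refine (Matrix.mul_sum _ _ _).trans (sum_congr rfl fun k _ => ?_)
    refine Eq.trans ?_ (matChain_succ R _).symm
    simp only [Equiv.coe_toEmbedding, Fin.snocEquiv_apply, Fin.snoc_castSucc, Fin.snoc_last]

theorem Fin.sum_Ici_two {M : Type*} [AddCommMonoid M] (f : Fin 2 → M) (k : Fin 2) :
    ∑ l ∈ Ici k, f l = if k = 0 then f 0 + f 1 else f 1 := by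
  match k with
  | 0 => simp [Fin.sum_univ_two]
  | 1 => simp [show Ici (1 : Fin 2) = {1} by decide]

theorem ind_le_ind_iff {N : ℕ} {α β : Finset (Fin N)} : ind α ≤ ind β ↔ α ⊆ β := by
  refine forall_congr' fun n => ?_
  by_cases hα : n ∈ α <;> by_cases hβ : n ∈ β <;> simp [ind, hα, hβ]

def indEquiv (N : ℕ) : Finset (Fin N) ≃ (Fin N → Fin 2) where
  toFun := ind
  invFun x := univ.filter fun n => x n = 1
  left_inv α := by ext n; by_cases h : n ∈ α <;> simp [ind, h]
  right_inv x := by funext n; by_cases h : x n = 1 <;> simp [ind, h]; omega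

theorem tt_superset_aggregation_general
    {N : ℕ}
    (R : Fin (N+1) → ℕ)
    (A : ∀ n : Fin N, Fin 2 → Matrix (Fin (R n.castSucc)) (Fin (R n.succ)) ℝ)
    (α : Finset (Fin N)) (i : Fin (R 0)) (j : Fin (R (Fin.last N))) :
    ttProd R (fun n k => if k = 0 then A n 0 + A n 1 else A n 1) (ind α) i j
      = ∑ β ∈ Finset.univ.filter (fun β : Finset (Fin N) => α ⊆ β),
          ttProd R A (ind β) i j := by
  have cores_eq : (fun n => if ind α n = 0 then A n 0 + A n 1 else A n 1) =
      fun n => ∑ k ∈ Ici (ind α n), A n k :=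
    funext fun n => (Fin.sum_Ici_two (A n) (ind α n)).symm
  rw [ttProd, cores_eq, matChain_sum, Matrix.sum_apply]
  refine (sum_equiv (indEquiv N) (fun β => ?_) fun _ _ => rfl).symm
  simp only [mem_filter, mem_univ, true_and, Fintype.mem_piFinset, mem_Ici]
  exact ind_le_ind_iff.symm

/-- replacing each core slice pair `(A^(n)[0], A^(n)[1])` by
`(A^(n)[0] + A^(n)[1], A^(n)[1])` turns a TT tensor `A` on `{0,1}^N` into the tensor of
superset aggregations: `B_α = Σ_{β ⊇ α} A_β`. -/
theorem tt_superset_aggregation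
    {N : ℕ} (hN : 1 ≤ N)
    (R : Fin (N+1) → ℕ) (hR0 : R 0 = 1) (hRN : R (Fin.last N) = 1)
    (A : ∀ n : Fin N, Fin 2 → Matrix (Fin (R n.castSucc)) (Fin (R n.succ)) ℝ)
    (α : Finset (Fin N)) (i : Fin (R 0)) (j : Fin (R (Fin.last N))) :
    ttProd R (fun n k => if k = 0 then A n 0 + A n 1 else A n 1) (ind α) i j
      = ∑ β ∈ Finset.univ.filter (fun β : Finset (Fin N) => α ⊆ β),
          ttProd R A (ind β) i j :=
  tt_superset_aggregation_general R A α i j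
end

section
/- Let f : ∏_{n=1}^N Fin I_n → ℝ be an additive function, f(x) = Σ_{n=1}^N g_n(x_n) for functions g_n : Fin I_n → ℝ, with N ≥ 2. Then f admits an exact tensor train representation with all ranks equal to 2: defining the first core as the 1×2 row vector (g_1(x_1), 1), the middle cores (1 < n < N) as the 2×2 matrix with rows (1, 0) and (g_n(x_n), 1), and the last core as the 2×1 column vector (1, g_N(x_N))ᵀ, the ordered matrix product reconstructs f(x) at every x. -/
open Finset

/-- TT ranks for the rank-2 representation of an additive function: boundary ranks `1`,
all internal ranks equal to `2`. -/
def addRank (N : ℕ) : Fin (N+1) → ℕ :=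
  fun i => if i = 0 ∨ i = Fin.last N then 1 else 2

/-!
The product of the first `k` cores is the row vector `(S_k, 1)` with
`S_k = g_1(x_1) + ⋯ + g_k(x_k)`: the first core is `(S_1, 1)`, right multiplication by
`[[1, 0], [g, 1]]` sends `(s, 1)` to `(s + g, 1)`, and the last core sends `(S_{N-1}, 1)` to
`S_{N-1} + g_N(x_N) = f(x)`.
-/

theorem Fin.partialSum_last {M : Type*} [AddCommMonoid M] {n : ℕ} (f : Fin n → M) :
    Fin.partialSum f (Fin.last n) = ∑ i, f i := by
  rw [Fin.partialSum, Fin.val_last, List.take_of_length_le (by simp), List.sum_ofFn]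

theorem matChain_eq_of_mul_eq {N : ℕ} {R : Fin (N+1) → ℕ}
    {A : ∀ n : Fin N, Matrix (Fin (R n.castSucc)) (Fin (R n.succ)) ℝ}
    (P : ∀ k : Fin (N+1), Matrix (Fin (R 0)) (Fin (R k)) ℝ) (hP₀ : P 0 = 1)
    (hP : ∀ n : Fin N, P n.castSucc * A n = P n.succ) :
    matChain R A = P (Fin.last N) := by
  unfold matChain
  induction Fin.last N using Fin.induction with
  | zero => exact hP₀.symm
  | succ n ih => rw [Fin.induction_succ, ih, hP]

/-- The `n`-th core of `additive_function_tt_rank_two`, with `c` in place of `g n (x n)`. -/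
def addCore (N : ℕ) (n : Fin N) (c : ℝ) :
    Matrix (Fin (addRank N n.castSucc)) (Fin (addRank N n.succ)) ℝ :=
  Matrix.of fun a b =>
    if (n : ℕ) = 0 then
      (if (b : ℕ) = 0 then c else 1)
    else if (n : ℕ) = N - 1 then
      (if (a : ℕ) = 0 then 1 else c)
    else
      (if (a : ℕ) = 0 ∧ (b : ℕ) = 0 then 1
       else if (a : ℕ) = 1 ∧ (b : ℕ) = 0 then c
       else if (a : ℕ) = 1 ∧ (b : ℕ) = 1 then 1 else 0)

/-- The product of the first `k` cores: the row vector `(s k, 1)`, degenerating to `1` at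
`k = 0` and to the `1 × 1` matrix `s N` at `k = N`. -/
def addPrefix (N : ℕ) (s : Fin (N+1) → ℝ) (k : Fin (N+1)) :
    Matrix (Fin (addRank N 0)) (Fin (addRank N k)) ℝ :=
  Matrix.of fun _ b => if k = 0 then 1 else if (b : ℕ) = 0 then s k else 1

section

variable {N : ℕ}

theorem addRank_zero : addRank N 0 = 1 := by
  simp [addRank]

theorem addRank_last : addRank N (Fin.last N) = 1 := by
  simp [addRank]

theorem addRank_eq_two {k : Fin (N+1)} (h₀ : k ≠ 0) (hN : k ≠ Fin.last N) : addRank N k = 2 := by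
  simp [addRank, h₀, hN]

theorem addPrefix_zero (s : Fin (N+1) → ℝ) : addPrefix N s 0 = 1 := by
  ext a b
  have := a.isLt
  have := b.isLt
  have := addRank_zero (N := N)
  simp [addPrefix, Matrix.one_apply, Fin.ext_iff, show (a : ℕ) = b by omega]

/-- The three cases are `1 * (c, 1) = (c, 1)`, `(s, 1) * [[1, 0], [c, 1]] = (s + c, 1)` and
`(s, 1) * (1, c)ᵀ = s + c`. -/
theorem addPrefix_mul_addCore (s : Fin (N+1) → ℝ) (hs₀ : s 0 = 0) (n : Fin N) (c : ℝ)
    (hs : s n.succ = s n.castSucc + c) :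
    addPrefix N s n.castSucc * addCore N n c = addPrefix N s n.succ := by
  ext a b
  have hb := b.isLt
  rw [Matrix.mul_apply]
  rcases Nat.eq_zero_or_pos n with hn | hn
  · have hn' : n.castSucc = 0 := Fin.ext hn
    have hR : 1 = addRank N n.castSucc := by rw [hn', addRank_zero]
    rw [← Fin.sum_congr' _ hR, Fin.sum_univ_one]
    have hs₁ : s n.succ = c := by rw [hs, hn', hs₀, zero_add]
    simp [addPrefix, addCore, hn, hn', hs₁, Fin.ext_iff]
  · have hR : 2 = addRank N n.castSucc :=
      (addRank_eq_two (by simp [Fin.ext_iff]; omega) (by simp [Fin.ext_iff]; omega)).symm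
    rw [← Fin.sum_congr' _ hR, Fin.sum_univ_two]
    by_cases hlast : (n : ℕ) = N - 1
    · have hR' : addRank N n.succ = 1 := by
        rw [show n.succ = Fin.last N from Fin.ext (by simp; omega), addRank_last]
      simp [addPrefix, addCore, hlast, show N - 1 ≠ 0 by omega, hs, show (b : ℕ) = 0 by omega,
        Fin.ext_iff]
    · have hR' : addRank N n.succ = 2 :=
        addRank_eq_two (by simp [Fin.ext_iff]) (by simp [Fin.ext_iff]; omega)
      rcases (by omega : (b : ℕ) = 0 ∨ (b : ℕ) = 1) with hb | hb <;>
        simp [addPrefix, addCore, hn.ne', hlast, hs, hb, Fin.ext_iff]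

end

/-- an additive function `f(x) = Σ_n g_n(x_n)` (with `N ≥ 2`) admits
an exact tensor train representation with all internal ranks equal to 2: first core the
row vector `(g_1(x_1), 1)`, middle cores the `2 × 2` matrices with rows `(1, 0)` and
`(g_n(x_n), 1)`, and last core the column vector `(1, g_N(x_N))ᵀ`. -/
theorem additive_function_tt_rank_two
    {N : ℕ} (hN : 2 ≤ N) {I : Fin N → ℕ}
    (g : ∀ n : Fin N, Fin (I n) → ℝ)
    (f : ((n : Fin N) → Fin (I n)) → ℝ)
    (hf : ∀ x, f x = ∑ n, g n (x n))
    (x : (n : Fin N) → Fin (I n))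
    (i : Fin (addRank N 0)) (j : Fin (addRank N (Fin.last N))) :
    ttProd (addRank N)
      (fun n xn => Matrix.of fun a b =>
        if (n : ℕ) = 0 then
          (if (b : ℕ) = 0 then g n xn else 1)
        else if (n : ℕ) = N - 1 then
          (if (a : ℕ) = 0 then 1 else g n xn)
        else
          (if (a : ℕ) = 0 ∧ (b : ℕ) = 0 then 1
           else if (a : ℕ) = 1 ∧ (b : ℕ) = 0 then g n xn
           else if (a : ℕ) = 1 ∧ (b : ℕ) = 1 then 1 else 0))
      x i j = f x := by
  change ttProd (addRank N) (fun n xn => addCore N n (g n xn)) x i j = f x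
  set s := Fin.partialSum fun n => g n (x n)
  have hchain : ttProd (addRank N) (fun n xn => addCore N n (g n xn)) x =
      addPrefix N s (Fin.last N) :=
    matChain_eq_of_mul_eq _ (addPrefix_zero s)
      fun n => addPrefix_mul_addCore s (Fin.partialSum_zero _) n _ (Fin.partialSum_succ _ n)
  have hN₀ : Fin.last N ≠ 0 := by simp [Fin.ext_iff]; omega
  have hj : (j : ℕ) = 0 := by
    have := j.isLt
    have := addRank_last (N := N)
    omega
  rw [hchain, hf, ← Fin.partialSum_last]
  simp [addPrefix, hN₀, hj, s]
end
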